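/- arXiv:2203.07871 — 3 statements merged into one kernel-verified Lean document; each statement's English description precedes it below -/
import Mathlib

section
/- For any fixed constant A > 0 and any positive integer n, ∑_{d ∣ n} μ²(d) A^{ω(d)} / φ(d) ≪ (log log 3n)^A, where the implied constant depends only on A. -/
/-!
For squarefree `d`, both `A ^ ω(d)` and `φ(d)` factor over the primes of `d`, so the sum is
`∏_{p ∣ n} (1 + A / (p - 1)) ≤ exp (A ∑_{p ∣ n} 1 / (p - 1))`, and it suffices to show
`∑_{p ∣ n} 1 / (p - 1) ≤ log log log 3n + O(1)`. Up to the convergent `∑ 1 / (p (p - 1))`,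
split at `y = log 3n`: the prime factors `p > y` number at most `log n / log y`, so contribute
`O(1)`, and those with `p ≤ y` contribute at most `∑_{p ≤ y} 1 / p ≤ log log y + O(1)`. This
Mertens bound follows by partial summation from `∑_{p ≤ N} log p / p ≤ log N + log 4`, which
comes from comparing `log N! ≥ ∑_{p ≤ N} ⌊N / p⌋ log p` with Chebyshev's `θ(N) ≤ N log 4`.
-/

open scoped Nat ArithmeticFunction.Moebius
open Finset Real

theorem totient_eq_prod_primeFactors_of_squarefree {d : ℕ} (hd : Squarefree d) :
    φ d = ∏ p ∈ d.primeFactors, φ p := by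
  have h := Nat.totient_mul_prod_primeFactors d
  rw [Nat.prod_primeFactors_of_squarefree hd, mul_comm] at h
  rw [Nat.eq_of_mul_eq_mul_left hd.ne_zero.bot_lt h]
  exact prod_congr rfl fun p hp => (Nat.totient_prime (Nat.prime_of_mem_primeFactors hp)).symm

theorem pow_card_primeFactors_div_totient_of_squarefree {K : Type*} [Field K] (A : K) {d : ℕ}
    (hd : Squarefree d) :
    A ^ #d.primeFactors / φ d = ∏ p ∈ d.primeFactors, A / φ p := by
  rw [totient_eq_prod_primeFactors_of_squarefree hd, prod_div_distrib, prod_const, Nat.cast_prod]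

theorem sum_divisors_moebius_sq_mul_prod_primeFactors {R : Type*} [CommRing R] (g : ℕ → R)
    {n : ℕ} (hn : n ≠ 0) :
    ∑ d ∈ n.divisors, (μ d : R) ^ 2 * ∏ p ∈ d.primeFactors, g p
      = ∏ p ∈ n.primeFactors, (1 + g p) := by
  have hμ : ∀ d, (μ d : R) ^ 2 = if Squarefree d then 1 else 0 := fun d => by
    split_ifs with hd
    · rw [← Int.cast_pow, ArithmeticFunction.moebius_sq_eq_one_of_squarefree hd, Int.cast_one]
    · rw [ArithmeticFunction.moebius_eq_zero_of_not_squarefree hd, Int.cast_zero,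
        zero_pow two_ne_zero]
  simp only [hμ, ite_mul, one_mul, zero_mul]
  rw [← sum_filter, Nat.sum_divisors_filter_squarefree hn, prod_one_add, Nat.factors_eq,
    List.toFinset_coe]
  refine sum_congr rfl fun s hs => ?_
  rw [prod_val]
  exact congrArg (∏ p ∈ ·, g p)
    (Nat.primeFactors_prod fun p hp => Nat.prime_of_mem_primeFactors (mem_powerset.1 hs hp))

theorem sum_divisors_moebius_sq_mul_pow_div_totient {K : Type*} [Field K] (A : K) {n : ℕ}
    (hn : n ≠ 0) :
    ∑ d ∈ n.divisors, (μ d : K) ^ 2 * A ^ #d.primeFactors / φ d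
      = ∏ p ∈ n.primeFactors, (1 + A / φ p) := by
  rw [← sum_divisors_moebius_sq_mul_prod_primeFactors _ hn]
  refine sum_congr rfl fun d _ => ?_
  rw [mul_div_assoc]
  by_cases hd : Squarefree d
  · rw [pow_card_primeFactors_div_totient_of_squarefree A hd]
  · simp [ArithmeticFunction.moebius_eq_zero_of_not_squarefree hd]

theorem sum_inv_sub_one_sub_inv_le_one {s : Finset ℕ} (hs : ∀ k ∈ s, 2 ≤ k) :
    ∑ k ∈ s, (1 / ((k : ℝ) - 1) - 1 / k) ≤ 1 := by
  obtain ⟨m, hm⟩ : ∃ m, s ⊆ Ico 2 (m + 2) := ⟨s.sup id, fun k hk => by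
    have := le_sup (f := id) hk
    simp only [id, mem_Ico] at this ⊢
    exact ⟨hs k hk, by omega⟩⟩
  have htel : ∑ k ∈ Ico 2 (m + 2), (1 / ((k : ℝ) - 1) - 1 / k) = 1 - 1 / (m + 1) := by
    rw [sum_Ico_eq_sum_range, show m + 2 - 2 = m by omega]
    have := sum_range_sub' (fun i : ℕ => 1 / ((i : ℝ) + 1)) m
    push_cast at this ⊢
    convert this using 2 <;> ring_nf
  calc ∑ k ∈ s, (1 / ((k : ℝ) - 1) - 1 / k)
      ≤ ∑ k ∈ Ico 2 (m + 2), (1 / ((k : ℝ) - 1) - 1 / k) :=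
        sum_le_sum_of_subset_of_nonneg hm fun k hk _ => by
          have : (2 : ℝ) ≤ k := by exact_mod_cast (mem_Ico.1 hk).1
          rw [sub_nonneg]
          exact one_div_le_one_div_of_le (by linarith) (by linarith)
    _ ≤ 1 := by rw [htel]; linarith [show (0 : ℝ) ≤ 1 / (m + 1) by positivity]

theorem div_le_factorization_factorial {p : ℕ} (hp : p.Prime) (N : ℕ) :
    N / p ≤ (N !).factorization p := by
  rw [Nat.factorization_factorial hp (lt_add_of_pos_right _ two_pos)]
  simpa using single_le_sum (fun i _ => Nat.zero_le (N / p ^ i))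
    (show 1 ∈ Ico 1 (Nat.log p N + 2) by simp)

theorem sum_primesLE_div_mul_log_le_log_factorial (N : ℕ) :
    ∑ p ∈ Nat.primesLE N, ((N / p : ℕ) : ℝ) * log p ≤ log N ! := by
  have hsub : Nat.primesLE N ⊆ (N !).primeFactors := fun p hp => by
    rw [Nat.mem_primesLE] at hp
    exact Nat.mem_primeFactors.2
      ⟨hp.2, Nat.dvd_factorial hp.2.pos hp.1, Nat.factorial_ne_zero N⟩
  rw [log_nat_eq_sum_factorization, Finsupp.sum, Nat.support_factorization]
  calc ∑ p ∈ Nat.primesLE N, ((N / p : ℕ) : ℝ) * log p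
      ≤ ∑ p ∈ Nat.primesLE N, ((N !).factorization p : ℝ) * log p :=
        sum_le_sum fun p hp => mul_le_mul_of_nonneg_right
          (mod_cast div_le_factorization_factorial (Nat.prime_of_mem_primesLE hp) N)
          (log_natCast_nonneg p)
    _ ≤ _ := sum_le_sum_of_subset_of_nonneg hsub fun p _ _ => by positivity

theorem sum_primesLE_log_div_le (N : ℕ) :
    ∑ p ∈ Nat.primesLE N, log p / p ≤ log N + log 4 := by
  rcases N.eq_zero_or_pos with rfl | hN
  · simpa using log_nonneg (by norm_num : (1 : ℝ) ≤ 4)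
  have hN' : (0 : ℝ) < N := mod_cast hN
  have hfloor : ∀ p ∈ Nat.primesLE N,
      (N : ℝ) * (log p / p) ≤ ((N / p : ℕ) : ℝ) * log p + log p := by
    intro p hp
    have hp0 : (0 : ℝ) < p := mod_cast (Nat.prime_of_mem_primesLE hp).pos
    have h := Nat.sub_one_lt_floor ((N : ℝ) / p)
    rw [Nat.floor_div_eq_div] at h
    rw [mul_div_left_comm, ← add_one_mul, mul_comm]
    exact mul_le_mul_of_nonneg_right (by linarith) (log_natCast_nonneg p)
  have hθ : ∑ p ∈ Nat.primesLE N, log p ≤ log 4 * N := by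
    rw [← Chebyshev.theta_eq_sum_primesLE_log]
    exact Chebyshev.theta_le_log4_mul_x hN'.le
  have hfact : log N ! ≤ N * log N := by
    rw [← Real.log_pow]
    exact log_le_log (mod_cast Nat.factorial_pos N) (mod_cast Nat.factorial_le_pow N)
  have hsum := sum_le_sum hfloor
  rw [← mul_sum, sum_add_distrib] at hsum
  refine le_of_mul_le_mul_left ?_ hN'
  linarith [sum_primesLE_div_mul_log_le_log_factorial N]

theorem sum_primesLE_succ_of_eq_zero {M : Type*} [AddCommMonoid M] {g : ℕ → M} {N : ℕ}
    (hg : g (N + 1) = 0) : ∑ p ∈ Nat.primesLE (N + 1), g p = ∑ p ∈ Nat.primesLE N, g p := by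
  rw [Nat.primesLE_succ]
  split_ifs
  · rw [sum_insert (Nat.notMem_primesLE N), hg, zero_add]
  · rfl

/-- The left side is non-increasing in `N`: this is Abel summation of
`1 / p = (log p / p) / log p` against `∑_{p ≤ N} log p / p ≤ log N + log 4`. -/
theorem sum_primesLE_inv_sub_le {N : ℕ} (hN : 2 ≤ N) :
    ∑ p ∈ Nat.primesLE N, 1 / (p : ℝ) - (∑ p ∈ Nat.primesLE N, log p / p - log 4) / log N
      - log (log N) ≤ 2 - log (log 2) := by
  induction N, hN using Nat.le_induction with
  | base =>
    have h2 : Nat.primesLE 2 = {2} := by decide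
    have hlog2 : log 2 ≠ 0 := (log_pos one_lt_two).ne'
    have hlog4 : log 4 = 2 * log 2 := by
      rw [show (4 : ℝ) = 2 ^ 2 by norm_num, Real.log_pow, Nat.cast_ofNat]
    rw [h2, sum_singleton, sum_singleton, hlog4, Nat.cast_ofNat]
    field_simp
    linarith
  | succ N hN ih =>
    have hL₀ : 0 < log N := log_pos (by exact_mod_cast hN)
    have hL : log N ≤ log (N + 1 : ℕ) :=
      log_le_log (by positivity) (by exact_mod_cast N.le_succ)
    have hL₁ : log (N + 1 : ℕ) ≠ 0 := (hL₀.trans_le hL).ne'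
    have habel : ∑ p ∈ Nat.primesLE (N + 1), (1 / (p : ℝ) - log p / p / log (N + 1 : ℕ))
        = ∑ p ∈ Nat.primesLE N, (1 / (p : ℝ) - log p / p / log (N + 1 : ℕ)) := by
      refine sum_primesLE_succ_of_eq_zero ?_
      rw [div_right_comm, div_self hL₁, sub_self]
    simp only [sum_sub_distrib, ← sum_div] at habel
    have hgap : log N * (1 / log N - 1 / log (N + 1 : ℕ))
        ≤ log (log (N + 1 : ℕ)) - log (log N) := by
      rw [← log_div hL₁ hL₀.ne', mul_sub, mul_one_div_cancel hL₀.ne',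
        ← div_eq_mul_one_div, ← inv_div]
      exact one_sub_inv_le_log_of_pos (div_pos (hL₀.trans_le hL) hL₀)
    have hS : ∑ p ∈ Nat.primesLE N, log p / p - log 4 ≤ log N := by
      linarith [sum_primesLE_log_div_le N]
    have hmono : 0 ≤ 1 / log N - 1 / log (N + 1 : ℕ) :=
      sub_nonneg.2 (one_div_le_one_div_of_le hL₀ hL)
    linear_combination ih + mul_le_mul_of_nonneg_right hS hmono + hgap + habel

theorem sum_primesLE_inv_le {N : ℕ} (hN : 2 ≤ N) :
    ∑ p ∈ Nat.primesLE N, 1 / (p : ℝ) ≤ log (log N) + 4 := by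
  have hL : 0 < log N := log_pos (by exact_mod_cast hN)
  have hS : (∑ p ∈ Nat.primesLE N, log p / p - log 4) / log N ≤ 1 :=
    div_le_one_of_le₀ (by linarith [sum_primesLE_log_div_le N]) hL.le
  have hlog2 : -log (log 2) ≤ 1 := by
    have h := log_le_sub_one_of_pos (inv_pos.2 (log_pos one_lt_two))
    rw [log_inv] at h
    have : (log 2)⁻¹ ≤ 2 := inv_le_of_inv_le₀ two_pos (by linarith [log_two_gt_d9])
    linarith
  linarith [sum_primesLE_inv_sub_le hN]

theorem sum_primesLE_floor_inv_le {x c : ℝ} (hc : 0 < c) (hc1 : c ≤ 1) (hcx : c ≤ log x) :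
    ∑ p ∈ Nat.primesLE ⌊x⌋₊, 1 / (p : ℝ) ≤ log (log x) + 4 - log c := by
  by_cases h2 : 2 ≤ ⌊x⌋₊
  · have hx : (2 : ℝ) ≤ ⌊x⌋₊ := mod_cast h2
    have hfloor : log (log ⌊x⌋₊) ≤ log (log x) :=
      log_le_log (log_pos (by linarith))
        (log_le_log (by linarith) (Nat.floor_le (zero_le_one.trans (Nat.floor_pos.1 (by omega)))))
    linarith [sum_primesLE_inv_le h2, log_nonpos hc.le hc1]
  · have hempty : Nat.primesLE ⌊x⌋₊ = ∅ := eq_empty_of_forall_notMem fun p hp =>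
      h2 ((Nat.two_le_of_mem_primesLE hp).trans (Nat.le_of_mem_primesLE hp))
    rw [hempty, sum_empty]
    linarith [log_le_log hc hcx]

theorem sum_primeFactors_log_le (n : ℕ) : ∑ p ∈ n.primeFactors, log p ≤ log n := by
  rcases n.eq_zero_or_pos with rfl | hn
  · simp
  rw [← log_prod fun p hp => Nat.cast_ne_zero.2 (Nat.prime_of_mem_primeFactors hp).ne_zero,
    ← Nat.cast_prod]
  exact log_le_log (mod_cast Nat.pos_of_ne_zero (prod_ne_zero_iff.2 fun p hp =>
    (Nat.prime_of_mem_primeFactors hp).ne_zero))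
    (mod_cast Nat.le_of_dvd hn (Nat.prod_primeFactors_dvd n))

theorem sum_primeFactors_filter_lt_inv_le {y : ℝ} (hy : 1 < y) (n : ℕ) :
    ∑ p ∈ n.primeFactors with y < (p : ℕ), 1 / (p : ℝ) ≤ log n / (y * log y) := by
  have hlogy : 0 < log y := log_pos hy
  calc ∑ p ∈ n.primeFactors with y < (p : ℕ), 1 / (p : ℝ)
      ≤ ∑ p ∈ n.primeFactors with y < (p : ℕ), log p / (y * log y) := by
        refine sum_le_sum fun p hp => ?_
        have hyp : y < p := (mem_filter.1 hp).2
        rw [div_le_div_iff₀ (by linarith) (by positivity), one_mul, mul_comm (log _)]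
        exact mul_le_mul hyp.le (log_le_log (by linarith) hyp.le) hlogy.le (by linarith)
    _ ≤ ∑ p ∈ n.primeFactors, log p / (y * log y) :=
        sum_le_sum_of_subset_of_nonneg (filter_subset _ _) fun p _ _ => by positivity
    _ ≤ log n / (y * log y) := by
        rw [← sum_div]
        exact div_le_div_of_nonneg_right (sum_primeFactors_log_le n) (by positivity)

theorem exists_sum_primeFactors_inv_totient_le :
    ∃ K, ∀ n : ℕ, 0 < n →
      ∑ p ∈ n.primeFactors, 1 / (φ p : ℝ) ≤ log (log (log (3 * n))) + K := by
  set c := log (log 3)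
  have hlog3 : 1 < log 3 := (lt_log_iff_exp_lt three_pos).2 exp_one_lt_three
  have hc : 0 < c := log_pos hlog3
  have hc1 : c ≤ 1 := (log_le_sub_one_of_pos (by positivity)).trans
    (by linarith [log_le_sub_one_of_pos three_pos])
  refine ⟨5 + 1 / c - log c, fun n hn => ?_⟩
  have hn' : (1 : ℝ) ≤ n := mod_cast hn
  set y := log (3 * n)
  have hy : log 3 ≤ y := log_le_log (by norm_num) (by linarith)
  have hcy : c ≤ log y := log_le_log (by positivity) hy
  have htot : ∑ p ∈ n.primeFactors, (1 / (φ p : ℝ) - 1 / p) ≤ 1 := by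
    have hφ : ∀ p ∈ n.primeFactors, (φ p : ℝ) = p - 1 := fun p hp => by
      have hp := Nat.prime_of_mem_primeFactors hp
      rw [Nat.totient_prime hp, Nat.cast_sub hp.one_le, Nat.cast_one]
    rw [sum_congr rfl fun p hp => by rw [hφ p hp]]
    exact sum_inv_sub_one_sub_inv_le_one fun p hp => (Nat.prime_of_mem_primeFactors hp).two_le
  have hsmall :
      ∑ p ∈ n.primeFactors with (p : ℕ) ≤ y, 1 / (p : ℝ) ≤ log (log y) + 4 - log c := by
    refine le_trans (sum_le_sum_of_subset_of_nonneg (fun p hp => ?_) fun p _ _ => by positivity)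
      (sum_primesLE_floor_inv_le hc hc1 hcy)
    rw [mem_filter] at hp
    exact Nat.mem_primesLE.2 ⟨Nat.le_floor hp.2, Nat.prime_of_mem_primeFactors hp.1⟩
  have hlarge : ∑ p ∈ n.primeFactors with ¬(p : ℕ) ≤ y, 1 / (p : ℝ) ≤ 1 / c := by
    simp only [not_le]
    refine (sum_primeFactors_filter_lt_inv_le (by linarith) n).trans ?_
    rw [div_le_div_iff₀ (mul_pos (by linarith) (by linarith)) hc, one_mul]
    exact mul_le_mul (log_le_log (by linarith) (by linarith)) hcy hc.le (by linarith)
  rw [sum_sub_distrib] at htot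
  linarith [sum_filter_add_sum_filter_not n.primeFactors (fun p : ℕ => (p : ℝ) ≤ y)
    fun p => 1 / (p : ℝ)]

open ArithmeticFunction

theorem sum_moebius_omega_div_totient (A : ℝ) (hA : 0 < A) :
    ∃ C : ℝ, ∀ n : ℕ, 0 < n →
      (∑ d ∈ n.divisors, ((moebius d : ℝ)) ^ 2 * A ^ d.primeFactors.card / (Nat.totient d : ℝ))
        ≤ C * (Real.log (Real.log (3 * n))) ^ A := by
  obtain ⟨K, hK⟩ := exists_sum_primeFactors_inv_totient_le
  refine ⟨exp (A * K), fun n hn => ?_⟩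
  have hM : 0 < Real.log (Real.log (3 * n)) :=
    log_pos <| (lt_log_iff_exp_lt (by positivity)).2 <| by
      linarith [exp_one_lt_three, show (1 : ℝ) ≤ n from mod_cast hn]
  calc ∑ d ∈ n.divisors, (μ d : ℝ) ^ 2 * A ^ #d.primeFactors / φ d
      = ∏ p ∈ n.primeFactors, (1 + A / φ p) :=
        sum_divisors_moebius_sq_mul_pow_div_totient A hn.ne'
    _ ≤ exp (∑ p ∈ n.primeFactors, A / φ p) :=
        prod_one_add_le_exp_sum _ fun p => div_nonneg hA.le (Nat.cast_nonneg _)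
    _ = exp (A * ∑ p ∈ n.primeFactors, 1 / (φ p : ℝ)) := by
        simp only [mul_sum, mul_one_div]
    _ ≤ exp (A * (Real.log (Real.log (Real.log (3 * n))) + K)) := by gcongr; exact hK n hn
    _ = exp (A * K) * Real.log (Real.log (3 * n)) ^ A := by
        rw [rpow_def_of_pos hM, ← exp_add]
        ring_nf
end

section
/- The double integral ∫_{1/10}^{1/3} (1/α) ∫_{1/3}^{(1-α)/2} dβ/(β(1-α-β)) dα is strictly less than 0.49254. -/
/-!
Since `1 / (β (s - β)) = (1 / β + 1 / (s - β)) / s`, the inner integral at `s = 1 - α` is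
`log (2 - 3α) / (1 - α)`, leaving `∫ log (2 - 3α) / (α (1 - α)) dα ≈ 0.49100`, a dilogarithm.
Replacing `log (1 + t)`, `t = 1 - 3α ≥ 0`, by its Padé upper bound `t (6 + t) / (6 + 4t)` gives a
rational integrand whose integral `7/10 log (10/3) + 4 log (27/20) - 81/20 log (22/15) ≈ 0.49208`
is explicit. Both the Padé bound (at `u = t / (2 + t)`) and the numerical bounds on the three
logarithms come from the series `½ log ((1 + u) / (1 - u)) = ∑ u^(2i+1) / (2i+1)`, truncated and
with its tail dominated by a geometric series.
-/

open Real Set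

namespace Real

lemma hasSum_pow_div_half_log_div {x : ℝ} (h : |x| < 1) :
    HasSum (fun i : ℕ => x ^ (2 * i + 1) / (2 * i + 1)) (1 / 2 * log ((1 + x) / (1 - x))) := by
  have h₁ : 0 < 1 + x := by linarith [neg_abs_le x]
  have h₂ : 0 < 1 - x := by linarith [le_abs_self x]
  have hterm : (fun i : ℕ => x ^ (2 * i + 1) / (2 * i + 1))
      = fun i : ℕ => 1 / 2 * (2 * (1 / (2 * i + 1)) * x ^ (2 * i + 1)) := by
    funext i; ring
  rw [log_div h₁.ne' h₂.ne', hterm]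
  exact (hasSum_log_sub_log_of_abs_lt_one h).mul_left (1 / 2)

/-- A sharper form of `Real.log_div_le_sum_range_add`: the tail is dominated by a geometric series
with first term `x ^ (2n+1) / (2n+1)`. -/
lemma half_log_div_le_sum_range_add_div {x : ℝ} (h₀ : 0 ≤ x) (h : x < 1) (n : ℕ) :
    1 / 2 * log ((1 + x) / (1 - x)) ≤
      (∑ i ∈ Finset.range n, x ^ (2 * i + 1) / (2 * i + 1))
        + x ^ (2 * n + 1) / ((2 * n + 1) * (1 - x ^ 2)) := by
  have hx2 : x ^ 2 < 1 := by nlinarith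
  have htail :=
    (hasSum_nat_add_iff' n).mpr (hasSum_pow_div_half_log_div (by rwa [abs_of_nonneg h₀]))
  have hgeom := (hasSum_geometric_of_lt_one (sq_nonneg x) hx2).mul_left
    (x ^ (2 * n + 1) / (2 * n + 1))
  have hle := hasSum_le (fun k => ?_) htail hgeom
  · rw [← div_div, div_eq_mul_inv _ (1 - x ^ 2)]
    linarith
  · rw [show 2 * (k + n) + 1 = (2 * n + 1) + 2 * k by ring, pow_add, pow_mul, div_mul_eq_mul_div]
    gcongr
    omega

lemma log_one_add_le_pade {t : ℝ} (ht : 0 ≤ t) :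
    log (1 + t) ≤ t * (6 + t) / (6 + 4 * t) := by
  set u := t / (2 + t) with hu
  have hu₀ : 0 ≤ u := by positivity
  have hu₁ : u < 1 := by rw [hu, div_lt_one (by positivity)]; linarith
  have hratio : (1 + u) / (1 - u) = 1 + t := by
    rw [hu]; field_simp; ring
  have hbound := half_log_div_le_sum_range_add_div hu₀ hu₁ 1
  rw [hratio] at hbound
  norm_num at hbound
  have hu_eq :
      u + u ^ 3 / (3 * (1 - u ^ 2)) = t / (2 + t) + t ^ 3 / (12 * (1 + t) * (2 + t)) := by
    have : 0 < 1 + t := by linarith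
    have h1u : 1 - (t / (2 + t)) ^ 2 = 4 * (1 + t) / (2 + t) ^ 2 := by field_simp; ring
    rw [hu, h1u]; field_simp; ring
  have hgap : t * (6 + t) / (6 + 4 * t) - 2 * (t / (2 + t) + t ^ 3 / (12 * (1 + t) * (2 + t)))
      = t ^ 4 / (6 * (1 + t) * (2 + t) * (3 + 2 * t)) := by
    field_simp; ring
  have : 0 ≤ t ^ 4 / (6 * (1 + t) * (2 + t) * (3 + 2 * t)) := by positivity
  linarith

end Real

lemma integral_one_div_mul_sub {s p q : ℝ} (hp : p ∈ Ioo 0 s) (hq : q ∈ Ioo 0 s) :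
    ∫ β in p..q, 1 / (β * (s - β)) = (log (q / (s - q)) - log (p / (s - p))) / s := by
  have hsub : uIcc p q ⊆ Ioo 0 s := ordConnected_Ioo.uIcc_subset hp hq
  have hs : s ≠ 0 := (hp.1.trans hp.2).ne'
  rw [log_div hq.1.ne' (sub_pos.2 hq.2).ne', log_div hp.1.ne' (sub_pos.2 hp.2).ne', sub_div]
  refine intervalIntegral.integral_eq_sub_of_hasDerivAt (f := fun β => (log β - log (s - β)) / s)
    (fun β hβ => ?_) (ContinuousOn.intervalIntegrable ?_)
  · obtain ⟨hβ₀, hβs⟩ := hsub hβ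
    have hsβ : s - β ≠ 0 := (sub_pos.2 hβs).ne'
    refine (((hasDerivAt_log hβ₀.ne').fun_sub
      (((hasDerivAt_id' β).const_sub s).log hsβ)).div_const s).congr_deriv ?_
    field_simp
    ring
  · refine ContinuousOn.div continuousOn_const (by fun_prop) fun β hβ => ?_
    obtain ⟨hβ₀, hβs⟩ := hsub hβ
    exact mul_ne_zero hβ₀.ne' (sub_pos.2 hβs).ne'

lemma integral_one_div_mul_one_sub_sub {α : ℝ} (hα : α < 2 / 3) :
    ∫ β in (1/3 : ℝ)..((1 - α) / 2), 1 / (β * (1 - α - β)) = log (2 - 3 * α) / (1 - α) := by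
  rw [integral_one_div_mul_sub ⟨by norm_num, by linarith⟩ ⟨by linarith, by linarith⟩]
  have hα₁ : (1 : ℝ) - α ≠ 0 := by linarith
  have h₁ : (1 - α) / 2 / (1 - α - (1 - α) / 2) = 1 := by field_simp; ring
  have h₂ : 1 / 3 / (1 - α - 1 / 3) = (2 - 3 * α)⁻¹ := by field_simp; ring
  rw [h₁, h₂, log_one, log_inv, zero_sub, neg_neg]

/-- The Padé bound `Real.log_one_add_le_pade` at `t = 1 - 3α`, divided by `α (1 - α)`. -/
noncomputable def padeMajorant (α : ℝ) : ℝ :=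
  (1 - 3 * α) * (7 - 3 * α) / ((10 - 12 * α) * (α * (1 - α)))

lemma one_div_mul_log_div_le_padeMajorant {α : ℝ} (h₀ : 0 < α) (h₁ : α ≤ 1 / 3) :
    1 / α * (log (2 - 3 * α) / (1 - α)) ≤ padeMajorant α := by
  have hpade : log (2 - 3 * α) ≤ (1 - 3 * α) * (7 - 3 * α) / (10 - 12 * α) := by
    convert log_one_add_le_pade (t := 1 - 3 * α) (by linarith) using 2 <;> ring
  have h₂ : 0 < α * (1 - α) := by nlinarith
  calc 1 / α * (log (2 - 3 * α) / (1 - α)) = log (2 - 3 * α) / (α * (1 - α)) := by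
        rw [one_div_mul_eq_div, div_div, mul_comm (1 - α)]
    _ ≤ (1 - 3 * α) * (7 - 3 * α) / (10 - 12 * α) / (α * (1 - α)) := by gcongr
    _ = padeMajorant α := div_div _ _ _

lemma continuousOn_padeMajorant : ContinuousOn padeMajorant (Icc (1/10) (1/3)) := by
  refine ContinuousOn.div (by fun_prop) (by fun_prop) fun α ⟨hα₀, hα₁⟩ => ?_
  have : 0 < α * (1 - α) := mul_pos (by linarith) (by linarith)
  exact (mul_pos (by linarith) this).ne'

lemma integral_padeMajorant :
    ∫ α in (1/10 : ℝ)..(1/3), padeMajorant α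
      = 7 / 10 * log (10 / 3) + 4 * log (27 / 20) - 81 / 20 * log (22 / 15) := by
  have hI : uIcc (1/10 : ℝ) (1/3) = Icc (1/10) (1/3) := uIcc_of_le (by norm_num)
  have hderiv : ∀ α ∈ Icc (1/10 : ℝ) (1/3),
      HasDerivAt (fun α => 7 / 10 * log α - 4 * log (1 - α) + 81 / 20 * log (5 - 6 * α))
        (padeMajorant α) α := by
    rintro α ⟨hα₀, hα₁⟩
    have h₀ : α ≠ 0 := by linarith
    have h₁ : (1 : ℝ) - α ≠ 0 := by linarith
    refine ((((hasDerivAt_log h₀).const_mul _).fun_sub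
      ((((hasDerivAt_id' α).const_sub 1).log h₁).const_mul _)).fun_add
      (((((hasDerivAt_id' α).const_mul 6).const_sub 5).log (by linarith)).const_mul
        _)).congr_deriv ?_
    -- stated in the normal form `field_simp` looks for
    have h₂ : (5 : ℝ) - α * 6 ≠ 0 := by linarith
    have h₃ : (10 : ℝ) - α * 12 ≠ 0 := by linarith
    rw [padeMajorant]
    field_simp
    ring
  have e₁ : log (10 / 3) = log (1 / 3) - log (1 / 10) := by
    rw [← log_div (by norm_num) (by norm_num)]; norm_num
  have e₂ : log (27 / 20) = log (1 - 1 / 10) - log (1 - 1 / 3) := by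
    rw [← log_div (by norm_num) (by norm_num)]; norm_num
  have e₃ : log (22 / 15) = log (5 - 6 * (1 / 10)) - log (5 - 6 * (1 / 3)) := by
    rw [← log_div (by norm_num) (by norm_num)]; norm_num
  rw [intervalIntegral.integral_eq_sub_of_hasDerivAt (hI ▸ hderiv)
    (hI ▸ continuousOn_padeMajorant).intervalIntegrable, e₁, e₂, e₃]
  ring

lemma log_combination_lt :
    7 / 10 * log (10 / 3) + 4 * log (27 / 20) - 81 / 20 * log (22 / 15) < 0.49254 := by
  have h₁ := half_log_div_le_sum_range_add_div (x := 7 / 13) (by norm_num) (by norm_num) 3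
  have h₂ := half_log_div_le_sum_range_add_div (x := 7 / 47) (by norm_num) (by norm_num) 3
  have h₃ := sum_range_le_log_div (x := 7 / 37) (by norm_num) (by norm_num) 3
  norm_num [Finset.sum_range_succ] at h₁ h₂ h₃
  linarith

theorem double_integral_lt :
    (∫ α in (1/10 : ℝ)..(1/3 : ℝ),
      (1 / α) * ∫ β in (1/3 : ℝ)..((1 - α) / 2), 1 / (β * (1 - α - β)))
      < 0.49254 := by
  have hI : uIcc (1/10 : ℝ) (1/3) = Icc (1/10) (1/3) := uIcc_of_le (by norm_num)
  have hcont :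
      ContinuousOn (fun α : ℝ => 1 / α * (log (2 - 3 * α) / (1 - α))) (Icc (1/10) (1/3)) := by
    fun_prop (disch := rintro α ⟨hα₀, hα₁⟩; linarith)
  calc _ = ∫ α in (1/10 : ℝ)..(1/3), 1 / α * (log (2 - 3 * α) / (1 - α)) :=
        intervalIntegral.integral_congr fun α hα => by
          rw [integral_one_div_mul_one_sub_sub (by linarith [(hI ▸ hα).2])]
    _ ≤ ∫ α in (1/10 : ℝ)..(1/3), padeMajorant α :=
        intervalIntegral.integral_mono_on (by norm_num) (hI ▸ hcont).intervalIntegrable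
          (hI ▸ continuousOn_padeMajorant).intervalIntegrable
          fun α hα => one_div_mul_log_div_le_padeMajorant (by linarith [hα.1]) hα.2
    _ = 7 / 10 * log (10 / 3) + 4 * log (27 / 20) - 81 / 20 * log (22 / 15) :=
        integral_padeMajorant
    _ < 0.49254 := log_combination_lt
end

section
/- Let f(a) be the indicator that a = p₁p₂ with N^{1/10} < p₁ ≤ N^{1/3} < p₂ ≤ (N/p₁)^{1/2}. For any integer d with 1 ≤ d ≤ N^{1/2}, ∑_{a : gcd(a,d) > 1} f(a)/a ≪ N^{-1/10}, with implied constant absolute. -/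
/-!
If `1 < gcd (p₁ * p₂) d` then `p₁ ∣ d` or `p₂ ∣ d`, so with `y = N^{1/10}` every counted `a`
is `q * r` with `q` a prime factor of `d` exceeding `y` and `r` a prime in `(y, y⁵]`. As
`d ≤ N^{1/2} = y⁵`, at most five prime factors of `d` exceed `y`, so their reciprocals sum to at
most `5 / y`. The sum of `1 / r` over primes `r ∈ (y, y⁵]` is bounded: Chebyshev's bound
`primorial n ≤ 4 ^ n` leaves at most `2^{k+2} / k` primes in the dyadic block `(2^k, 2^{k+1}]`,
which then contributes at most `4 / k`; the `O(k₀)` blocks meeting `(y, y⁵]` all have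
`k ≥ k₀ = ⌊log₂ y⌋`. When `y < 2`, the trivial bound `N = y¹⁰ ≤ 2¹¹ / y` suffices.
-/

open Finset

lemma card_primes_Ioc_two_pow_mul_le (k : ℕ) :
    k * #{p ∈ Ioc (2 ^ k) (2 ^ (k + 1)) | p.Prime} ≤ 2 ^ (k + 2) := by
  set B := {p ∈ Ioc (2 ^ k) (2 ^ (k + 1)) | p.Prime}
  have hB : B ⊆ {p ∈ range (2 ^ (k + 1) + 1) | p.Prime} := by
    intro p hp
    simp only [B, mem_filter, mem_Ioc, mem_range] at hp ⊢
    exact ⟨by omega, hp.2⟩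
  have : 2 ^ (k * #B) ≤ 2 ^ 2 ^ (k + 2) := calc
    2 ^ (k * #B) = (2 ^ k) ^ #B := pow_mul 2 k #B
    _ ≤ ∏ p ∈ B, p := pow_card_le_prod _ _ _ fun p hp => (mem_Ioc.1 (mem_filter.1 hp).1).1.le
    _ ≤ primorial (2 ^ (k + 1)) :=
      prod_le_prod_of_subset_of_one_le' hB fun p hp _ => (mem_filter.1 hp).2.one_lt.le
    _ ≤ 4 ^ 2 ^ (k + 1) := primorial_le_four_pow _
    _ = 2 ^ 2 ^ (k + 2) := by rw [show 4 = 2 ^ 2 by rfl, ← pow_mul, pow_succ 2 (k + 1), mul_comm]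
  exact (Nat.pow_le_pow_iff_right one_lt_two).1 this

lemma sum_inv_primes_Ioc_two_pow_le {k : ℕ} (hk : 1 ≤ k) :
    ∑ p ∈ Ioc (2 ^ k : ℕ) (2 ^ (k + 1)) with p.Prime, (1 : ℝ) / p ≤ 4 / k := by
  set B := {p ∈ Ioc (2 ^ k) (2 ^ (k + 1)) | p.Prime}
  have hcard : (k : ℝ) * #B ≤ 2 ^ (k + 2) := by exact_mod_cast card_primes_Ioc_two_pow_mul_le k
  have hk' : (0 : ℝ) < k := by exact_mod_cast hk
  calc ∑ p ∈ B, (1 : ℝ) / p ≤ #B • (1 / 2 ^ k) := by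
        refine sum_le_card_nsmul _ _ _ fun p hp => one_div_le_one_div_of_le (by positivity) ?_
        exact_mod_cast (mem_Ioc.1 (mem_filter.1 hp).1).1.le
    _ = (k * #B) / k / 2 ^ k := by rw [nsmul_eq_mul, mul_div_cancel_left₀ _ hk'.ne']; ring
    _ ≤ 2 ^ (k + 2) / k / 2 ^ k := by gcongr
    _ = 4 / k := by field_simp; ring

lemma sum_inv_primes_Ioc_two_pow_two_pow_le {a : ℕ} (ha : 1 ≤ a) {b : ℕ} (hab : a ≤ b) :
    ∑ p ∈ Ioc (2 ^ a : ℕ) (2 ^ b) with p.Prime, (1 : ℝ) / p ≤ 4 * ((b : ℝ) - a) / a := by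
  induction b, hab using Nat.le_induction with
  | base => simp
  | succ b hab ih =>
    have hsplit : Ioc (2 ^ a) (2 ^ (b + 1)) = Ioc (2 ^ a) (2 ^ b) ∪ Ioc (2 ^ b) (2 ^ (b + 1)) :=
      (Ioc_union_Ioc_eq_Ioc (Nat.pow_le_pow_right two_pos hab)
        (Nat.pow_le_pow_right two_pos b.le_succ)).symm
    rw [hsplit, filter_union, sum_union (disjoint_filter_filter (Ioc_disjoint_Ioc_of_le le_rfl))]
    have hblock := sum_inv_primes_Ioc_two_pow_le (ha.trans hab)
    have hba : (4 : ℝ) / b ≤ 4 / a := by gcongr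
    calc _ ≤ 4 * ((b : ℝ) - a) / a + 4 / a := add_le_add ih (hblock.trans hba)
      _ = 4 * (((b + 1 : ℕ) : ℝ) - a) / a := by push_cast; ring

noncomputable def primesIoc (y z : ℝ) : Finset ℕ := {p ∈ Iic ⌊z⌋₊ | p.Prime ∧ y < (p : ℕ)}

lemma mem_primesIoc {y z : ℝ} (hz : 0 ≤ z) {p : ℕ} :
    p ∈ primesIoc y z ↔ p.Prime ∧ y < p ∧ p ≤ z := by
  rw [primesIoc, mem_filter, mem_Iic, Nat.le_floor_iff hz, and_comm, and_assoc]

lemma sum_inv_primesIoc_pow_le {y : ℝ} (hy : 2 ≤ y) {c : ℕ} (hc : 1 ≤ c) :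
    ∑ p ∈ primesIoc y (y ^ c), (1 : ℝ) / p ≤ 8 * c := by
  set a := Nat.log 2 ⌊y⌋₊
  have hfloor : 2 ≤ ⌊y⌋₊ := Nat.le_floor (by exact_mod_cast hy)
  have ha : 1 ≤ a := Nat.le_log_of_pow_le one_lt_two (by simpa using hfloor)
  have hlow : (2 : ℝ) ^ a ≤ y :=
    le_trans (by exact_mod_cast Nat.pow_log_le_self 2 (by omega)) (Nat.floor_le (by linarith))
  have hhigh : y < 2 ^ (a + 1) :=
    (Nat.lt_floor_add_one y).trans_le (by exact_mod_cast Nat.lt_pow_succ_log_self one_lt_two _)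
  have hsub : primesIoc y (y ^ c) ⊆ {p ∈ Ioc (2 ^ a) (2 ^ ((a + 1) * c)) | p.Prime} := by
    intro p hp
    obtain ⟨hprime, hyp, hpy⟩ := (mem_primesIoc (by positivity)).1 hp
    have hpc : (p : ℝ) ≤ 2 ^ ((a + 1) * c) := by
      rw [pow_mul]; exact hpy.trans (pow_le_pow_left₀ (by linarith) hhigh.le c)
    refine mem_filter.2 ⟨mem_Ioc.2 ⟨?_, ?_⟩, hprime⟩
    · exact_mod_cast hlow.trans_lt hyp
    · exact_mod_cast hpc
  have ha' : (1 : ℝ) ≤ a := by exact_mod_cast ha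
  calc ∑ p ∈ primesIoc y (y ^ c), (1 : ℝ) / p
      ≤ ∑ p ∈ Ioc (2 ^ a : ℕ) (2 ^ ((a + 1) * c)) with p.Prime, (1 : ℝ) / p :=
        sum_le_sum_of_subset_of_nonneg hsub fun _ _ _ => by positivity
    _ ≤ 4 * (((a + 1) * c : ℕ) - (a : ℝ)) / a :=
        sum_inv_primes_Ioc_two_pow_two_pow_le ha (by nlinarith)
    _ ≤ 8 * c := by
        rw [div_le_iff₀ (by positivity)]; push_cast
        nlinarith [(by exact_mod_cast hc : (1 : ℝ) ≤ c)]

lemma pow_card_primeFactors_gt_le {d : ℕ} (hd : d ≠ 0) {y : ℝ} (hy : 0 ≤ y) :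
    y ^ #{p ∈ d.primeFactors | y < (p : ℕ)} ≤ d := by
  set s := {p ∈ d.primeFactors | y < (p : ℕ)}
  have hdvd : ∏ p ∈ s, p ∣ d := (prod_dvd_prod_of_subset _ _ id (filter_subset _ _)).trans
    (Nat.prod_primeFactors_dvd d)
  calc y ^ #s = ∏ _p ∈ s, y := (prod_const y).symm
    _ ≤ ∏ p ∈ s, (p : ℝ) := prod_le_prod (fun _ _ => hy) fun p hp => (mem_filter.1 hp).2.le
    _ ≤ d := by rw [← Nat.cast_prod]; exact_mod_cast Nat.le_of_dvd (Nat.pos_of_ne_zero hd) hdvd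

lemma sum_inv_primeFactors_gt_le {d : ℕ} (hd : d ≠ 0) {y : ℝ} (hy : 1 < y) {k : ℕ}
    (hdy : (d : ℝ) ≤ y ^ k) : ∑ p ∈ d.primeFactors with y < (p : ℕ), (1 : ℝ) / p ≤ k / y := by
  set s := {p ∈ d.primeFactors | y < (p : ℕ)}
  have hcard : #s ≤ k :=
    (pow_le_pow_iff_right₀ hy).1 ((pow_card_primeFactors_gt_le hd (by linarith)).trans hdy)
  calc ∑ p ∈ s, (1 : ℝ) / p ≤ #s • (1 / y) :=
        sum_le_card_nsmul _ _ _ fun p hp => one_div_le_one_div_of_le (by linarith)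
          (mem_filter.1 hp).2.le
    _ ≤ k / y := by rw [nsmul_eq_mul, mul_one_div]; gcongr

lemma Nat.Prime.dvd_or_dvd_of_one_lt_gcd_mul {p q d : ℕ} (hp : p.Prime) (hq : q.Prime)
    (h : 1 < Nat.gcd (p * q) d) : p ∣ d ∨ q ∣ d := by
  by_contra! hpq
  have : Nat.Coprime (p * q) d :=
    Nat.Coprime.mul_left (hp.coprime_iff_not_dvd.2 hpq.1) (hq.coprime_iff_not_dvd.2 hpq.2)
  omega

open scoped Pointwise

lemma sum_ite_inv_le_mul_of_mem_mul {s t u : Finset ℕ} {P : ℕ → Prop} [DecidablePred P]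
    (h : ∀ a ∈ s, P a → a ∈ t * u) :
    ∑ a ∈ s, (if P a then (1 : ℝ) / a else 0) ≤
      (∑ q ∈ t, (1 : ℝ) / q) * ∑ r ∈ u, (1 : ℝ) / r := calc
  ∑ a ∈ s, (if P a then (1 : ℝ) / a else 0) = ∑ a ∈ s with P a, (1 : ℝ) / a := (sum_filter _ _).symm
  _ ≤ ∑ a ∈ t * u, (1 : ℝ) / a :=
      sum_le_sum_of_subset_of_nonneg (fun a ha => h a (mem_filter.1 ha).1 (mem_filter.1 ha).2)
        fun _ _ _ => by positivity
  _ ≤ ∑ qr ∈ t ×ˢ u, (1 : ℝ) / (qr.1 * qr.2 : ℕ) := by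
      rw [mul_def]; exact sum_image_le_of_nonneg fun _ _ => by positivity
  _ = (∑ q ∈ t, (1 : ℝ) / q) * ∑ r ∈ u, (1 : ℝ) / r := by
      rw [sum_mul_sum, sum_product]; simp only [Nat.cast_mul, one_div_mul_one_div]

lemma mul_mem_primeFactors_gt_mul_primesIoc {p q d : ℕ} (hd : d ≠ 0) (hp : p.Prime)
    (hq : q.Prime) (h : 1 < Nat.gcd (p * q) d) {y z : ℝ} (hz : 0 ≤ z) (hyp : y < p) (hyq : y < q)
    (hpz : (p : ℝ) ≤ z) (hqz : (q : ℝ) ≤ z) :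
    p * q ∈ {r ∈ d.primeFactors | y < (r : ℕ)} * primesIoc y z := by
  rcases hp.dvd_or_dvd_of_one_lt_gcd_mul hq h with hpd | hqd
  · exact mem_mul.2 ⟨p, mem_filter.2 ⟨Nat.mem_primeFactors.2 ⟨hp, hpd, hd⟩, hyp⟩, q,
      (mem_primesIoc hz).2 ⟨hq, hyq, hqz⟩, rfl⟩
  · exact mem_mul.2 ⟨q, mem_filter.2 ⟨Nat.mem_primeFactors.2 ⟨hq, hqd, hd⟩, hyq⟩, p,
      (mem_primesIoc hz).2 ⟨hp, hyp, hpz⟩, mul_comm q p⟩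

lemma sum_ite_one_div_le_card (s : Finset ℕ) (P : ℕ → Prop) [DecidablePred P] :
    ∑ a ∈ s, (if P a then (1 : ℝ) / a else 0) ≤ #s := by
  simpa using sum_le_card_nsmul s (fun a => if P a then (1 : ℝ) / a else 0) 1 fun a _ => by
    split_ifs
    · simpa using Nat.cast_inv_le_one a
    · exact zero_le_one

open Classical in
theorem sum_f_gcd_gt_one :
    ∃ C : ℝ, ∀ N : ℕ, 2 ≤ N → ∀ d : ℕ, 1 ≤ d → (d : ℝ) ≤ (N : ℝ) ^ ((1:ℝ)/2) →
      (∑ a ∈ Finset.Icc 1 N,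
        if 1 < Nat.gcd a d ∧ ∃ p₁ p₂ : ℕ, p₁.Prime ∧ p₂.Prime ∧ a = p₁ * p₂ ∧
            (N : ℝ) ^ ((1:ℝ)/10) < (p₁ : ℝ) ∧ (p₁ : ℝ) ≤ (N : ℝ) ^ ((1:ℝ)/3) ∧
            (N : ℝ) ^ ((1:ℝ)/3) < (p₂ : ℝ) ∧ (p₂ : ℝ) ≤ ((N : ℝ) / p₁) ^ ((1:ℝ)/2)
        then (1 : ℝ) / a else 0)
        ≤ C * (N : ℝ) ^ (-(1:ℝ)/10) := by
  refine ⟨2048, fun N hN d hd hdN => ?_⟩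
  have hN0 : (0 : ℝ) < N := by positivity
  set y := (N : ℝ) ^ ((1 : ℝ) / 10) with hy
  have hy0 : 0 < y := by positivity
  have hpow (n : ℕ) : y ^ n = (N : ℝ) ^ ((n : ℝ) / 10) := by
    rw [hy, ← Real.rpow_natCast, ← Real.rpow_mul hN0.le]; ring_nf
  rw [neg_div, Real.rpow_neg hN0.le, ← hy]
  by_cases hy2 : 2 ≤ y
  · have hy3 : y ≤ (N : ℝ) ^ ((1 : ℝ) / 3) :=
      Real.rpow_le_rpow_of_exponent_le (by exact_mod_cast (by omega : 1 ≤ N)) (by norm_num)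
    have hy5 : (N : ℝ) ^ ((1 : ℝ) / 2) = y ^ 5 := by rw [hpow]; norm_num
    calc _ ≤ (∑ q ∈ d.primeFactors with y < (q : ℕ), (1 : ℝ) / q) *
          ∑ r ∈ primesIoc y (y ^ 5), (1 : ℝ) / r := by
          refine sum_ite_inv_le_mul_of_mem_mul ?_
          rintro _ - ⟨hgcd, p₁, p₂, hp₁, hp₂, rfl, h₁, h₂, h₃, h₄⟩
          have hp₂' : (p₂ : ℝ) ≤ y ^ 5 := h₄.trans <| hy5 ▸ Real.rpow_le_rpow (by positivity)
            (div_le_self hN0.le (by exact_mod_cast hp₁.one_le)) (by norm_num)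
          exact mul_mem_primeFactors_gt_mul_primesIoc (by omega) hp₁ hp₂ hgcd (by positivity) h₁
            (hy3.trans_lt h₃) ((h₂.trans_lt h₃).le.trans hp₂') hp₂'
      _ ≤ (5 / y) * (8 * 5) := by
          gcongr
          · exact sum_inv_primeFactors_gt_le (by omega) (by linarith) (hy5 ▸ hdN)
          · exact sum_inv_primesIoc_pow_le hy2 (by norm_num)
      _ ≤ 2048 * y⁻¹ := by rw [div_mul_eq_mul_div, div_eq_mul_inv]; gcongr; norm_num
  · have hN : (N : ℝ) = y ^ 10 := by rw [hpow]; norm_num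
    calc _ ≤ ((#(Icc 1 N) : ℕ) : ℝ) := sum_ite_one_div_le_card _ _
      _ = y ^ 11 * y⁻¹ := by rw [Nat.card_Icc, Nat.add_sub_cancel, hN]; field_simp
      _ ≤ 2 ^ 11 * y⁻¹ := by gcongr; exact (not_le.1 hy2).le
      _ = 2048 * y⁻¹ := by norm_num
end
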